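/- Let (Ω,F,ℙ) be a probability space and Z a strictly positive random variable with E[Z] = 1. Let N ≥ 2 agents have utility functions U_i satisfying the standard conditions, competition weights λ_i ∈ [0,1], and initial wealths x_0^i > 0. Let (X^{1,*},…,X^{N,*}) be an admissible strategy profile such that for every i ∈ {1,…,N}: E[Z·X^{i,*}] = x_0^i and there exists a constant C^i > 0 with U_i'(X^{i,*}/(X̄^{i,*})^{λ_i}) = C^i·Z·(X̄^{i,*})^{λ_i} ℙ-almost surely and E[Ũ_i(C^i·Z·(X̄^{i,*})^{λ_i})] < ∞. Then (X^{1,*},…,X^{N,*}) is a Nash equilibrium. -/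

import Mathlib

/-! First-order conditions are sufficient for optimality by the tangent-line (Fenchel) inequality
of the concave utility: writing `a = (X̄^i)^{λ_i}` and `d = C·Z·a = U'(X^{i,*}/a)`, every
`g ∈ C(x_0^i)` satisfies `U(g/a) ≤ Ũ(d) + C·Z·g` pointwise, with equality at `g = X^{i,*}`.
Taking expectations and using `E[Z·g] ≤ x_0^i = E[Z·X^{i,*}]` gives the claim; the only
delicate point is that `E[Ũ(d)]` may be `-∞`, so the expectations are taken in `EReal` and
the integrable part `C·Z·g` is split off additively. -/

open MeasureTheory

/-- Generalized expectation `E[W] = E[W⁺] − E[W⁻]` valued in `EReal`, with the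
convention that it equals `⊥` when both parts are infinite. -/
noncomputable def eExp {Ω : Type*} [MeasurableSpace Ω] (P : Measure Ω) (W : Ω → ℝ) : EReal :=
  (∫⁻ ω, ENNReal.ofReal (W ω) ∂P).toEReal - (∫⁻ ω, ENNReal.ofReal (-(W ω)) ∂P).toEReal

/-- The conjugate function `Ũ(y) = sup_{x>0} [U(x) − x·y]`. -/
noncomputable def conj (U : ℝ → ℝ) (y : ℝ) : ℝ := sSup ((fun x => U x - x * y) '' Set.Ioi 0)

/-- The class `C(x)` of (strictly positive) claims affordable from initial wealth `x`:
`g ≥ 0` measurable with `E[Z·g] ≤ x`. -/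
def inC {Ω : Type*} [MeasurableSpace Ω] (P : Measure Ω) (Z : Ω → ℝ) (x : ℝ) (g : Ω → ℝ) : Prop :=
  Measurable g ∧ (∀ ω, 0 < g ω) ∧
    ∫⁻ ω, ENNReal.ofReal (Z ω * g ω) ∂P ≤ ENNReal.ofReal x

/-- Geometric average of the other players' terminal wealth:
`X̄^i = (∏_{j≠i} X^j)^{1/(N−1)}`. -/
noncomputable def xbar {Ω : Type*} {N : ℕ} (X : Fin N → Ω → ℝ) (i : Fin N) (ω : Ω) : ℝ :=
  (∏ j ∈ Finset.univ.erase i, X j ω) ^ (((N : ℝ) - 1)⁻¹)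

/-- Nash equilibrium for the `N`-player game of utility maximization under
multiplicative relative performance criteria: each `X i` is admissible and maximizes
`g ↦ E[U_i(g/(X̄^i)^{λ_i})]` over `C(x_0^i)` with finite optimal expected utility. -/
def IsNash {Ω : Type*} [MeasurableSpace Ω] (P : Measure Ω) (Z : Ω → ℝ) {N : ℕ}
    (U : Fin N → ℝ → ℝ) (lam : Fin N → ℝ) (x0 : Fin N → ℝ) (X : Fin N → Ω → ℝ) : Prop :=
  (∀ i, inC P Z (x0 i) (X i)) ∧
  ∀ i,
    eExp P (fun ω => U i (X i ω / (xbar X i ω) ^ (lam i))) < ⊤ ∧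
    ∀ g : Ω → ℝ, inC P Z (x0 i) g →
      eExp P (fun ω => U i (g ω / (xbar X i ω) ^ (lam i))) ≤
        eExp P (fun ω => U i (X i ω / (xbar X i ω) ^ (lam i)))

section GeneralizedExpectation

variable {Ω : Type*} [MeasurableSpace Ω] {P : Measure Ω}

lemma eExp_congr {W₁ W₂ : Ω → ℝ} (h : W₁ =ᵐ[P] W₂) : eExp P W₁ = eExp P W₂ := by
  have hpos : (fun ω => ENNReal.ofReal (W₁ ω)) =ᵐ[P] fun ω => ENNReal.ofReal (W₂ ω) :=
    h.mono fun _ hω => congrArg ENNReal.ofReal hω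
  have hneg : (fun ω => ENNReal.ofReal (-W₁ ω)) =ᵐ[P] fun ω => ENNReal.ofReal (-W₂ ω) :=
    h.mono fun _ hω => congrArg (fun x => ENNReal.ofReal (-x)) hω
  simp only [eExp, lintegral_congr_ae hpos, lintegral_congr_ae hneg]

lemma eExp_mono {W₁ W₂ : Ω → ℝ} (h : ∀ᵐ ω ∂P, W₁ ω ≤ W₂ ω) : eExp P W₁ ≤ eExp P W₂ :=
  EReal.sub_le_sub
    (EReal.coe_ennreal_le_coe_ennreal_iff.2 <|
      lintegral_mono_ae (h.mono fun _ hω => ENNReal.ofReal_le_ofReal hω))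
    (EReal.coe_ennreal_le_coe_ennreal_iff.2 <|
      lintegral_mono_ae (h.mono fun _ hω => ENNReal.ofReal_le_ofReal (neg_le_neg hω)))

lemma lintegral_ofReal_ne_top_of_integrable {q : Ω → ℝ} (hq : Integrable q P) :
    ∫⁻ ω, ENNReal.ofReal (q ω) ∂P ≠ ⊤ :=
  ne_top_of_le_ne_top hq.2.ne (lintegral_mono fun ω => Real.ofReal_le_enorm (q ω))

lemma integrable_of_lintegral_ofReal_ne_top {V : Ω → ℝ} (hV : AEMeasurable V P)
    (hpos : ∫⁻ ω, ENNReal.ofReal (V ω) ∂P ≠ ⊤) (hneg : ∫⁻ ω, ENNReal.ofReal (-V ω) ∂P ≠ ⊤) :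
    Integrable V P := by
  refine ((integrable_toReal_of_lintegral_ne_top hV.ennreal_ofReal hpos).sub
    (integrable_toReal_of_lintegral_ne_top hV.neg.ennreal_ofReal hneg)).congr
    (ae_of_all _ fun ω => ?_)
  simp only [Pi.sub_apply, Pi.neg_apply, ENNReal.toReal_ofReal', max_zero_sub_eq_self]

lemma eExp_of_integrable {W : Ω → ℝ} (hW : Integrable W P) :
    eExp P W = ((∫ ω, W ω ∂P : ℝ) : EReal) := by
  rw [integral_eq_lintegral_pos_part_sub_lintegral_neg_part hW, EReal.coe_sub,
    EReal.coe_ennreal_toReal (lintegral_ofReal_ne_top_of_integrable hW),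
    EReal.coe_ennreal_toReal
      (lintegral_ofReal_ne_top_of_integrable (q := fun ω => -W ω) hW.neg)]
  rfl

lemma lintegral_ofReal_add_ne_top {f q : Ω → ℝ} (hq : Integrable q P)
    (hf : ∫⁻ ω, ENNReal.ofReal (f ω) ∂P ≠ ⊤) :
    ∫⁻ ω, ENNReal.ofReal (f ω + q ω) ∂P ≠ ⊤ := by
  refine ne_top_of_le_ne_top
    (ENNReal.add_ne_top.2 ⟨hf, lintegral_ofReal_ne_top_of_integrable hq⟩) ?_
  calc ∫⁻ ω, ENNReal.ofReal (f ω + q ω) ∂P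
      ≤ ∫⁻ ω, (ENNReal.ofReal (f ω) + ENNReal.ofReal (q ω)) ∂P :=
        lintegral_mono fun _ => ENNReal.ofReal_add_le
    _ = _ := lintegral_add_right' _ hq.aemeasurable.ennreal_ofReal

lemma lintegral_ofReal_add_eq_top_iff {f q : Ω → ℝ} (hq : Integrable q P) :
    ∫⁻ ω, ENNReal.ofReal (f ω + q ω) ∂P = ⊤ ↔ ∫⁻ ω, ENNReal.ofReal (f ω) ∂P = ⊤ := by
  refine ⟨fun h => by_contra fun hf => lintegral_ofReal_add_ne_top hq hf h,
    fun h => by_contra fun hfq => ?_⟩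
  simpa only [Pi.neg_apply, add_neg_cancel_right, h, ne_eq, not_true_eq_false]
    using lintegral_ofReal_add_ne_top hq.neg hfq

lemma eExp_add_integrable {V q : Ω → ℝ} (hV : AEMeasurable V P) (hq : Integrable q P) :
    eExp P (fun ω => V ω + q ω) = eExp P V + ((∫ ω, q ω ∂P : ℝ) : EReal) := by
  have hpos := lintegral_ofReal_add_eq_top_iff (P := P) (f := V) hq
  have hneg :
      ∫⁻ ω, ENNReal.ofReal (-V ω + -q ω) ∂P = ⊤ ↔ ∫⁻ ω, ENNReal.ofReal (-V ω) ∂P = ⊤ :=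
    lintegral_ofReal_add_eq_top_iff hq.neg
  by_cases hA : ∫⁻ ω, ENNReal.ofReal (V ω) ∂P = ⊤ <;>
    by_cases hB : ∫⁻ ω, ENNReal.ofReal (-V ω) ∂P = ⊤
  · simp only [eExp, neg_add, hpos.2 hA, hneg.2 hB, hA, hB]
    simp
  · have hB' : ∫⁻ ω, ENNReal.ofReal (-V ω + -q ω) ∂P ≠ ⊤ := mt hneg.1 hB
    simp only [eExp, neg_add, hpos.2 hA, hA, EReal.coe_ennreal_top]
    rw [EReal.top_sub (mt EReal.coe_ennreal_eq_top_iff.1 hB'),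
      EReal.top_sub (mt EReal.coe_ennreal_eq_top_iff.1 hB),
      EReal.top_add_of_ne_bot (EReal.coe_ne_bot _)]
  · simp only [eExp, neg_add, hneg.2 hB, hB]
    simp
  · have hVi := integrable_of_lintegral_ofReal_ne_top hV hA hB
    rw [eExp_of_integrable (W := fun ω => V ω + q ω) (hVi.add hq), eExp_of_integrable hVi,
      ← EReal.coe_add, integral_add hVi hq]

end GeneralizedExpectation

section ConcaveConjugate

variable {U : ℝ → ℝ} {S : Set ℝ} {x y : ℝ}

lemma ConcaveOn.le_add_deriv_mul_sub (hU : ConcaveOn ℝ S U) (hx : x ∈ S) (hy : y ∈ S)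
    (hd : DifferentiableAt ℝ U x) : U y ≤ U x + deriv U x * (y - x) := by
  rcases lt_trichotomy y x with hyx | rfl | hxy
  · have h := hU.deriv_le_slope hy hx hyx hd
    rw [slope_def_field, le_div_iff₀ (sub_pos.2 hyx)] at h
    linarith
  · simp
  · have h := hU.slope_le_deriv hx hy hxy hd
    rw [slope_def_field, div_le_iff₀ (sub_pos.2 hxy)] at h
    linarith

lemma conj_deriv_eq (hU : ConcaveOn ℝ (Set.Ioi 0) U) (hx : 0 < x)
    (hd : DifferentiableAt ℝ U x) : conj U (deriv U x) = U x - x * deriv U x := by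
  refine IsGreatest.csSup_eq ⟨⟨x, hx, rfl⟩, ?_⟩
  rintro _ ⟨t, ht, rfl⟩
  have := hU.le_add_deriv_mul_sub hx ht hd
  dsimp only
  linarith

lemma ConcaveOn.apply_div_le_of_deriv_eq (hU : ConcaveOn ℝ (Set.Ioi 0) U) {a s t c : ℝ}
    (ha : 0 < a) (hs : 0 < s) (ht : 0 < t) (hd : DifferentiableAt ℝ U (s / a))
    (hderiv : deriv U (s / a) = c * a) : U (t / a) ≤ U (s / a) - c * s + c * t := by
  have htangent := hU.le_add_deriv_mul_sub (div_pos hs ha) (div_pos ht ha) hd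
  have hlin : c * a * (t / a - s / a) = c * t - c * s := by field_simp
  rw [hderiv, hlin] at htangent
  linarith

lemma conj_mul_eq_of_deriv_eq (hU : ConcaveOn ℝ (Set.Ioi 0) U) {a s c : ℝ}
    (ha : 0 < a) (hs : 0 < s) (hd : DifferentiableAt ℝ U (s / a))
    (hderiv : deriv U (s / a) = c * a) : conj U (c * a) = U (s / a) - c * s := by
  rw [← hderiv, conj_deriv_eq hU (div_pos hs ha) hd, hderiv]
  field_simp

end ConcaveConjugate

lemma ContinuousOn.measurable_comp_of_mem {Ω : Type*} [MeasurableSpace Ω] {U : ℝ → ℝ}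
    {S : Set ℝ} (hU : ContinuousOn U S) {f : Ω → ℝ} (hf : Measurable f) (hfS : ∀ ω, f ω ∈ S) :
    Measurable fun ω => U (f ω) :=
  hU.domRestrict.measurable.comp (hf.subtype_mk (h := hfS))

section BestResponse

variable {Ω : Type*} [MeasurableSpace Ω] {P : Measure Ω} {Z : Ω → ℝ} {x : ℝ}

lemma integrable_mul_of_inC (hZ : Measurable Z) (hZnn : ∀ ω, 0 ≤ Z ω) {g : Ω → ℝ}
    (hg : inC P Z x g) : Integrable (fun ω => Z ω * g ω) P := by
  refine ⟨(hZ.mul hg.1).aestronglyMeasurable, ?_⟩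
  rw [hasFiniteIntegral_iff_ofReal (ae_of_all _ fun ω => mul_nonneg (hZnn ω) (hg.2.1 ω).le)]
  exact hg.2.2.trans_lt ENNReal.ofReal_lt_top

lemma integral_mul_le_of_inC_of_budget_eq (hZ : Measurable Z) (hZnn : ∀ ω, 0 ≤ Z ω)
    {g X : Ω → ℝ} (hg : inC P Z x g) (hX : inC P Z x X)
    (hbudget : ∫⁻ ω, ENNReal.ofReal (Z ω * X ω) ∂P = ENNReal.ofReal x) :
    ∫ ω, Z ω * g ω ∂P ≤ ∫ ω, Z ω * X ω ∂P := by
  rw [integral_eq_lintegral_of_nonneg_ae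
      (ae_of_all _ fun ω => mul_nonneg (hZnn ω) (hg.2.1 ω).le) (hZ.mul hg.1).aestronglyMeasurable,
    integral_eq_lintegral_of_nonneg_ae
      (ae_of_all _ fun ω => mul_nonneg (hZnn ω) (hX.2.1 ω).le) (hZ.mul hX.1).aestronglyMeasurable,
    hbudget]
  exact ENNReal.toReal_mono ENNReal.ofReal_ne_top hg.2.2

/-- The benchmark `a` stands for `(X̄^i)^{λ_i}`, which player `i` takes as given. -/
def IsBestResponse (P : Measure Ω) (Z : Ω → ℝ) (U : ℝ → ℝ) (x : ℝ) (a X : Ω → ℝ) : Prop :=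
  eExp P (fun ω => U (X ω / a ω)) < ⊤ ∧
    ∀ g : Ω → ℝ, inC P Z x g → eExp P (fun ω => U (g ω / a ω)) ≤ eExp P (fun ω => U (X ω / a ω))

theorem isBestResponse_of_deriv_eq {U : ℝ → ℝ} {a X : Ω → ℝ} {C : ℝ}
    (hZ : Measurable Z) (hZnn : ∀ ω, 0 ≤ Z ω)
    (hconc : ConcaveOn ℝ (Set.Ioi 0) U) (hdiff : DifferentiableOn ℝ U (Set.Ioi 0))
    (ha : Measurable a) (hapos : ∀ ω, 0 < a ω) (hX : inC P Z x X)
    (hbudget : ∫⁻ ω, ENNReal.ofReal (Z ω * X ω) ∂P = ENNReal.ofReal x) (hC : 0 ≤ C)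
    (hderiv : ∀ᵐ ω ∂P, deriv U (X ω / a ω) = C * Z ω * a ω)
    (hfin : eExp P (fun ω => conj U (C * Z ω * a ω)) < ⊤) :
    IsBestResponse P Z U x a X := by
  have hXa : ∀ ω, 0 < X ω / a ω := fun ω => div_pos (hX.2.1 ω) (hapos ω)
  have hdAt : ∀ ω, DifferentiableAt ℝ U (X ω / a ω) :=
    fun ω => hdiff.differentiableAt (isOpen_Ioi.mem_nhds (hXa ω))
  set V : Ω → ℝ := fun ω => U (X ω / a ω) - C * Z ω * X ω with hV_def
  have hV : Measurable V :=
    (hdiff.continuousOn.measurable_comp_of_mem (hX.1.div ha) hXa).sub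
      ((hZ.const_mul C).mul hX.1)
  have hCZ : ∀ {g}, inC P Z x g → Integrable (fun ω => C * Z ω * g ω) P := fun hg => by
    simpa only [mul_assoc] using (integrable_mul_of_inC hZ hZnn hg).const_mul C
  have hUX : eExp P (fun ω => U (X ω / a ω)) =
      eExp P V + ((∫ ω, C * Z ω * X ω ∂P : ℝ) : EReal) := by
    simpa only [hV_def, sub_add_cancel] using eExp_add_integrable hV.aemeasurable (hCZ hX)
  have hV_conj : V =ᵐ[P] fun ω => conj U (C * Z ω * a ω) := by
    filter_upwards [hderiv] with ω hω
    exact (conj_mul_eq_of_deriv_eq hconc (hapos ω) (hX.2.1 ω) (hdAt ω) hω).symm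
  refine ⟨hUX ▸ EReal.add_lt_top ((eExp_congr hV_conj).trans_lt hfin).ne (EReal.coe_ne_top _),
    fun g hg => ?_⟩
  have hbound : ∀ᵐ ω ∂P, U (g ω / a ω) ≤ V ω + C * Z ω * g ω := by
    filter_upwards [hderiv] with ω hω
    exact hconc.apply_div_le_of_deriv_eq (hapos ω) (hX.2.1 ω) (hg.2.1 ω) (hdAt ω) hω
  have hcost : ∫ ω, C * Z ω * g ω ∂P ≤ ∫ ω, C * Z ω * X ω ∂P := by
    simp_rw [mul_assoc, integral_const_mul]
    exact mul_le_mul_of_nonneg_left (integral_mul_le_of_inC_of_budget_eq hZ hZnn hg hX hbudget) hC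
  calc eExp P (fun ω => U (g ω / a ω))
      ≤ eExp P (fun ω => V ω + C * Z ω * g ω) := eExp_mono hbound
    _ = eExp P V + ((∫ ω, C * Z ω * g ω ∂P : ℝ) : EReal) :=
        eExp_add_integrable hV.aemeasurable (hCZ hg)
    _ ≤ eExp P V + ((∫ ω, C * Z ω * X ω ∂P : ℝ) : EReal) := by gcongr
    _ = eExp P (fun ω => U (X ω / a ω)) := hUX.symm

end BestResponse

lemma measurable_xbar {Ω : Type*} [MeasurableSpace Ω] {N : ℕ} {X : Fin N → Ω → ℝ}
    (hX : ∀ j, Measurable (X j)) (i : Fin N) : Measurable (xbar X i) :=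
  (Finset.measurable_prod _ fun j _ => hX j).pow_const _

lemma xbar_pos {Ω : Type*} {N : ℕ} {X : Fin N → Ω → ℝ} (hX : ∀ j ω, 0 < X j ω) (i : Fin N)
    (ω : Ω) : 0 < xbar X i ω :=
  Real.rpow_pos_of_pos (Finset.prod_pos fun j _ => hX j ω) _

theorem stmt13_general {Ω : Type*} [MeasurableSpace Ω] (P : Measure Ω)
    (Z : Ω → ℝ) (hZmeas : Measurable Z) (hZpos : ∀ ω, 0 < Z ω)
    (N : ℕ) (U : Fin N → ℝ → ℝ) (lam : Fin N → ℝ) (x0 : Fin N → ℝ)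
    (hconc : ∀ i, StrictConcaveOn ℝ (Set.Ioi 0) (U i))
    (hsmooth : ∀ i, ContDiffOn ℝ 1 (U i) (Set.Ioi 0))
    (X : Fin N → Ω → ℝ) (hXadm : ∀ i, inC P Z (x0 i) (X i))
    (hchar : ∀ i, (∫⁻ ω, ENNReal.ofReal (Z ω * X i ω) ∂P = ENNReal.ofReal (x0 i)) ∧
      ∃ C : ℝ, 0 < C ∧
        (∀ᵐ ω ∂P, deriv (U i) (X i ω / (xbar X i ω) ^ (lam i)) =
          C * Z ω * (xbar X i ω) ^ (lam i)) ∧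
        eExp P (fun ω => conj (U i) (C * Z ω * (xbar X i ω) ^ (lam i))) < ⊤) :
    IsNash P Z U lam x0 X := by
  refine ⟨hXadm, fun i => ?_⟩
  obtain ⟨hbudget, C, hC, hderiv, hfin⟩ := hchar i
  have hxbar_pos := xbar_pos (fun j => (hXadm j).2.1) i
  exact isBestResponse_of_deriv_eq hZmeas (fun ω => (hZpos ω).le) (hconc i).concaveOn
    ((hsmooth i).differentiableOn one_ne_zero)
    ((measurable_xbar (fun j => (hXadm j).1) i).pow_const _)
    (fun ω => Real.rpow_pos_of_pos (hxbar_pos ω) _) (hXadm i) hbudget hC.le hderiv hfin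

theorem stmt13 {Ω : Type*} [MeasurableSpace Ω] (P : Measure Ω) [IsProbabilityMeasure P]
    (Z : Ω → ℝ) (hZmeas : Measurable Z) (hZpos : ∀ ω, 0 < Z ω)
    (hZint : Integrable Z P) (hZ1 : ∫ ω, Z ω ∂P = 1)
    (N : ℕ) (hN : 2 ≤ N) (U : Fin N → ℝ → ℝ) (lam : Fin N → ℝ) (x0 : Fin N → ℝ)
    (hmono : ∀ i, StrictMonoOn (U i) (Set.Ioi 0))
    (hconc : ∀ i, StrictConcaveOn ℝ (Set.Ioi 0) (U i))
    (hsmooth : ∀ i, ContDiffOn ℝ 1 (U i) (Set.Ioi 0))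
    (hinada0 : ∀ i, Filter.Tendsto (deriv (U i)) (nhdsWithin 0 (Set.Ioi 0)) Filter.atTop)
    (hinadaInf : ∀ i, Filter.Tendsto (deriv (U i)) Filter.atTop (nhds 0))
    (hlam : ∀ i, lam i ∈ Set.Icc (0:ℝ) 1) (hx0 : ∀ i, 0 < x0 i)
    (X : Fin N → Ω → ℝ) (hXadm : ∀ i, inC P Z (x0 i) (X i))
    (hchar : ∀ i, (∫⁻ ω, ENNReal.ofReal (Z ω * X i ω) ∂P = ENNReal.ofReal (x0 i)) ∧
      ∃ C : ℝ, 0 < C ∧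
        (∀ᵐ ω ∂P, deriv (U i) (X i ω / (xbar X i ω) ^ (lam i)) =
          C * Z ω * (xbar X i ω) ^ (lam i)) ∧
        eExp P (fun ω => conj (U i) (C * Z ω * (xbar X i ω) ^ (lam i))) < ⊤) :
    IsNash P Z U lam x0 X :=
  stmt13_general P Z hZmeas hZpos N U lam x0 hconc hsmooth X hXadm hchar
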